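/- (Marginal probability formula for Partition-DPP.) Let $A \in \mathbb{R}^{m \times n}$, let $[m] = \mathcal{P}_1 \uplus \cdots \uplus \mathcal{P}_p$ with $|\mathcal{P}_l| = m_l$, and fix targets $0 \le k_l \le m_l$ with $k = \sum_l k_l$. Let $S \subseteq [m]$ with $|S| = t$, $|S \cap \mathcal{P}_l| = t_l \le k_l$ for all $l$, and $\det(A_S A_S^T) > 0$. Fix $j$ with $t_j < k_j$ and $i \in \mathcal{P}_j \setminus S$; let $B = A - \pi_S(A)$ with rows $b_1,\dots,b_m$ and $C_i = B - \pi_{\{i\}}(B)$. Assume the denominator below is nonzero. Then $\dfrac{\sum_{T \in \mathcal{C}_1} \det(A_{S \cup \{i\} \cup T} A_{S \cup \{i\} \cup T}^T)}{\sum_{T \in \mathcal{C}_2} \det(A_{S \cup T} A_{S \cup T}^T)} = \dfrac{\|b_i\|^2 \, |c'(C_i C_i^T)|}{|c''(B B^T)|}$, where $\mathcal{C}_1$ is the family of $T \subseteq [m] \setminus (S \cup \{i\})$ with $|T \cap \mathcal{P}_j| = k_j - t_j - 1$ and $|T \cap \mathcal{P}_l| = k_l - t_l$ for $l \ne j$,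 $\mathcal{C}_2$ is the family of $T \subseteq [m] \setminus S$ with $|T \cap \mathcal{P}_l| = k_l - t_l$ for all $l$, $c'(C_i C_i^T) = c_{m_1-k_1+t_1, \dots, m_j-k_j+t_j+1, \dots, m_p-k_p+t_p}(C_i C_i^T)$, and $c''(B B^T) = c_{m_1-k_1+t_1, \dots, m_p-k_p+t_p}(B B^T)$. -/

import Mathlib

/-- `res v S` is the matrix `B = v - π_S(v)`: its `i`-th row is the component of the `i`-th
row `v i` orthogonal to the span of the rows of `v` indexed by `S`. -/
noncomputable def res {m n : ℕ} (v : Fin m → EuclideanSpace ℝ (Fin n)) (S : Finset (Fin m)) :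
    Fin m → EuclideanSpace ℝ (Fin n) :=
  fun i => v i - (Submodule.orthogonalProjectionOnto (Submodule.span ℝ (v '' (S : Set (Fin m)))) (v i) :
    EuclideanSpace ℝ (Fin n))

/-- `gramDet v S = det(v_S v_S^T)`: the determinant of the Gram matrix of the rows of `v`
indexed by `S`. -/
noncomputable def gramDet {m n : ℕ} (v : Fin m → EuclideanSpace ℝ (Fin n))
    (S : Finset (Fin m)) : ℝ :=
  Matrix.det (Matrix.of fun i j : {x // x ∈ S} => (inner ℝ (v i.1) (v j.1) : ℝ))

/-- `gram v = v vᵀ`, the Gram matrix of the rows of `v`. -/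
noncomputable def gram {m n : ℕ} (v : Fin m → EuclideanSpace ℝ (Fin n)) :
    Matrix (Fin m) (Fin m) ℝ :=
  Matrix.of fun i j => (inner ℝ (v i) (v j) : ℝ)

/-- The coefficient `c_{e₁,…,e_p}(M)` of the monomial `x₁^{e₁} ⋯ x_p^{e_p}` in the multivariate
characteristic polynomial `det(M - x₁I₁ - ⋯ - x_pI_p)`, where the partition
`[m] = 𝒫₁ ⊎ ⋯ ⊎ 𝒫_p` is encoded by the labelling function `part` (so `𝒫_l = part⁻¹(l)`),
and `I_l` is the diagonal 0/1 matrix supported on `𝒫_l`. -/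
noncomputable def mcharCoeff {m p : ℕ} (M : Matrix (Fin m) (Fin m) ℝ) (part : Fin m → Fin p)
    (e : Fin p → ℕ) : ℝ :=
  MvPolynomial.coeff (Finsupp.equivFunOnFinite.symm e)
    (Matrix.det (Matrix.of fun i j =>
      MvPolynomial.C (M i j) - (if i = j then MvPolynomial.X (part i) else 0)))

/-!
Both sums factor through residuals. A Gram determinant splits along an orthogonal projection,
`det G_A(S ∪ T) = det G_A(S) · det G_B(T)` with `B = A - π_S(A)`: the rows of `B` arise from those
of `A` by a block-unitriangular change of rows, and the rows of `B` on `T` are orthogonal to those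
of `A` on `S`. Applied twice, the numerator is `det G_A(S) · ‖b_i‖² · ∑ det G_{C_i}(T)`.
On the other side, multilinearity of the determinant in the rows expands `det(M - ∑ x_l I_l)` as
`∑_U (∏_{u ∉ U} (-x_{part u})) · det M_U`, so `c_e(M)` is `±` the sum of the principal minors
`det M_U` whose complement meets each `𝒫_l` in `e_l` points. For a Gram matrix these minors are
nonnegative, and they vanish when `U` contains a zero row, i.e. meets `S` (for `B`) or `S ∪ {i}`
(for `C_i`). Hence `|c''(B Bᵀ)|` and `|c'(C_i C_iᵀ)|` are the two sums over `T`, and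
`det G_A(S) > 0` cancels.
-/

open Finset Matrix

theorem Matrix.det_add_diagonal {R n : Type*} [CommRing R] [Fintype n] [DecidableEq n]
    (M : Matrix n n R) (d : n → R) :
    (M + diagonal d).det =
      ∑ s : Finset n, (∏ i ∈ sᶜ, d i) * (M.submatrix (↑) (↑) : Matrix s s R).det := by
  have hrows : M + diagonal d = of (M.row + fun i => d i • (1 : Matrix n n R).row i) := by
    ext i j; by_cases h : i = j <;> simp [h]
  rw [hrows]
  change detRowAlternating (M.row + fun i => d i • (1 : Matrix n n R).row i) = _
  rw [detRowAlternating.map_add_univ]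
  refine sum_congr rfl fun s _ => ?_
  have hpw : s.piecewise M.row (fun i => d i • (1 : Matrix n n R).row i) =
      sᶜ.piecewise (fun i => d i • s.piecewise M.row (1 : Matrix n n R).row i)
        (s.piecewise M.row (1 : Matrix n n R).row) := by
    ext i : 1; by_cases h : i ∈ s <;> simp [h]
  rw [hpw, ← det_piecewise_one_eq_submatrix_det]
  exact detRowAlternating.toMultilinearMap.map_piecewise_smul d _ sᶜ

open MvPolynomial in
theorem mcharCoeff_eq_sum {m p : ℕ} (M : Matrix (Fin m) (Fin m) ℝ) (part : Fin m → Fin p)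
    (e : Fin p → ℕ) :
    mcharCoeff M part e = (-1) ^ (∑ l, e l) *
      ∑ U ∈ univ.filter (fun U : Finset (Fin m) => ∀ l, #(Uᶜ.filter (part · = l)) = e l),
        (M.submatrix (↑) (↑) : Matrix U U ℝ).det := by
  have hmat : (of fun i j => C (M i j) - if i = j then X (part i) else 0) =
      M.map C + diagonal fun i => -X (part i) := by
    ext i j; by_cases h : i = j <;> simp [h, sub_eq_add_neg]
  have hprod : ∀ U : Finset (Fin m), (∏ i ∈ Uᶜ, -X (part i) : MvPolynomial (Fin p) ℝ) =
      monomial (∑ i ∈ Uᶜ, Finsupp.single (part i) 1) (∏ _i ∈ Uᶜ, (-1 : ℝ)) := by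
    intro U
    rw [monomial_sum_prod]
    exact prod_congr rfl fun i _ => by rw [X, ← map_neg]
  have hexp : ∀ U : Finset (Fin m),
      (∑ i ∈ Uᶜ, Finsupp.single (part i) 1 = Finsupp.equivFunOnFinite.symm e) ↔
        ∀ l, #(Uᶜ.filter (part · = l)) = e l := by
    intro U
    simp [Finsupp.ext_iff, Finsupp.finsetSum_apply, Finsupp.single_apply, sum_boole]
  rw [mcharCoeff, hmat, det_add_diagonal, coeff_sum, sum_filter, mul_sum]
  refine sum_congr rfl fun U _ => ?_
  rw [hprod, submatrix_map, ← RingHom.mapMatrix_apply, ← RingHom.map_det, mul_comm,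
    C_mul_monomial, coeff_monomial]
  simp only [hexp U]
  split_ifs with hU
  · rw [prod_const, card_eq_sum_card_fiberwise (f := part) (t := univ) (by simp)]
    simp only [hU]
    ring
  · simp

theorem Matrix.gram_sum_smul {ι κ E : Type*} [Fintype κ] [NormedAddCommGroup E]
    [InnerProductSpace ℝ E] (L : Matrix ι κ ℝ) (u : κ → E) :
    Matrix.gram ℝ (fun i => ∑ k, L i k • u k) = L * Matrix.gram ℝ u * Lᵀ := by
  ext i j
  simp only [gram_apply, sum_inner, inner_sum, real_inner_smul_left, real_inner_smul_right,
    mul_apply, transpose_apply, sum_mul]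
  exact sum_congr rfl fun _ _ => sum_congr rfl fun _ _ => by ring

theorem gramDet_nonneg {m n : ℕ} (v : Fin m → EuclideanSpace ℝ (Fin n)) (U : Finset (Fin m)) :
    0 ≤ gramDet v U :=
  (posSemidef_gram ℝ fun x : U => v x).det_nonneg

theorem gramDet_eq_zero_of_mem {m n : ℕ} {v : Fin m → EuclideanSpace ℝ (Fin n)}
    {U : Finset (Fin m)} {x : Fin m} (hx : x ∈ U) (hvx : v x = 0) : gramDet v U = 0 :=
  det_eq_zero_of_row_eq_zero ⟨x, hx⟩ fun _ => by simp [hvx]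

theorem gramDet_singleton {m n : ℕ} (v : Fin m → EuclideanSpace ℝ (Fin n)) (i : Fin m) :
    gramDet v {i} = ‖v i‖ ^ 2 := by
  simp [gramDet, det_unique]

section Residual

variable {m n : ℕ} (v : Fin m → EuclideanSpace ℝ (Fin n)) (S : Finset (Fin m))

theorem res_apply (t : Fin m) :
    res v S t = v t - (Submodule.span ℝ (v '' S)).starProjection (v t) := rfl

theorem res_eq_zero {s : Fin m} (hs : s ∈ S) : res v S s = 0 := by
  rw [res_apply, sub_eq_zero, eq_comm, Submodule.starProjection_eq_self_iff]
  exact Submodule.subset_span ⟨s, hs, rfl⟩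

theorem inner_res_eq_zero {s : Fin m} (hs : s ∈ S) (t : Fin m) :
    inner ℝ (v s) (res v S t) = 0 :=
  Submodule.sub_starProjection_mem_orthogonal (K := Submodule.span ℝ (v '' S)) (v t) _
    (Submodule.subset_span ⟨s, hs, rfl⟩)

theorem exists_res_eq_sub_sum :
    ∃ c : Fin m → S → ℝ, ∀ t, res v S t = v t - ∑ s, c t s • v s := by
  have h : ∀ t, ∃ c : S → ℝ, ∑ s, c s • v s =
      (Submodule.span ℝ (v '' S)).starProjection (v t) := by
    intro t
    rw [← Submodule.mem_span_image_finset_iff_exists_fun]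
    exact Submodule.starProjection_apply_mem _ _
  choose c hc using h
  exact ⟨c, fun t => by rw [hc, res_apply]⟩

theorem gramDet_union {T : Finset (Fin m)} (hST : Disjoint S T) :
    gramDet v (S ∪ T) = gramDet v S * gramDet (res v S) T := by
  obtain ⟨c, hc⟩ := exists_res_eq_sub_sum v S
  let u : S ⊕ T → EuclideanSpace ℝ (Fin n) := Sum.elim (fun s => v s) (fun t => v t)
  let L : Matrix (S ⊕ T) (S ⊕ T) ℝ := fromBlocks 1 0 (of fun t s => -c t s) 1
  have hcomb : (fun x => ∑ y, L x y • u y) =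
      Sum.elim (fun s : S => v s) (fun t : T => res v S t) := by
    ext1 (s | t) <;> simp [L, u, Fintype.sum_sum_type, one_apply, hc, sub_eq_neg_add]
  have hblocks : Matrix.gram ℝ (Sum.elim (fun s : S => v s) (fun t : T => res v S t)) =
      fromBlocks (Matrix.gram ℝ fun s : S => v s) 0 0
        (Matrix.gram ℝ fun t : T => res v S t) := by
    ext (s | t) (s' | t')
    · rfl
    · exact inner_res_eq_zero v S s.2 t'
    · exact (real_inner_comm _ _).trans (inner_res_eq_zero v S s'.2 t)
    · rfl
  have hL : L.det = 1 := by simp [L]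
  calc gramDet v (S ∪ T) = (Matrix.gram ℝ u).det := by
        rw [gramDet, ← det_submatrix_equiv_self (Equiv.Finset.union S T hST)]
        congr 1
        ext (s | t) (s' | t') <;> rfl
    _ = (L * Matrix.gram ℝ u * Lᵀ).det := by simp [det_mul, hL]
    _ = gramDet v S * gramDet (res v S) T := by
        rw [← gram_sum_smul, hcomb, hblocks, det_fromBlocks_zero₂₁]
        rfl

theorem res_eq_zero_of_eq_zero {x : Fin m} (hx : v x = 0) : res v S x = 0 := by
  rw [res_apply, hx, map_zero, sub_zero]

theorem gramDet_insert {i : Fin m} {T : Finset (Fin m)} (hi : i ∉ T) :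
    gramDet v (insert i T) = ‖v i‖ ^ 2 * gramDet (res v {i}) T := by
  rw [insert_eq, gramDet_union v {i} (disjoint_singleton_left.2 hi), gramDet_singleton]

theorem sum_gramDet_union {F : Finset (Finset (Fin m))} (hF : ∀ T ∈ F, Disjoint S T) :
    ∑ T ∈ F, gramDet v (S ∪ T) = gramDet v S * ∑ T ∈ F, gramDet (res v S) T := by
  rw [mul_sum]
  exact sum_congr rfl fun T hT => gramDet_union v S (hF T hT)

theorem sum_gramDet_insert_union {i : Fin m} (hiS : i ∉ S) {F : Finset (Finset (Fin m))}
    (hF : ∀ T ∈ F, Disjoint (insert i S) T) :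
    ∑ T ∈ F, gramDet v (insert i (S ∪ T)) =
      gramDet v S * (‖res v S i‖ ^ 2 * ∑ T ∈ F, gramDet (res (res v S) {i}) T) := by
  rw [mul_sum, mul_sum]
  refine sum_congr rfl fun T hT => ?_
  obtain ⟨hiT, hST⟩ := disjoint_insert_left.1 (hF T hT)
  rw [← union_insert, gramDet_union v S (disjoint_insert_right.2 ⟨hiS, hST⟩),
    gramDet_insert _ hiT]

end Residual

section Partition

variable {m p : ℕ} (part : Fin m → Fin p)

theorem card_filter_add_card_filter_compl (U : Finset (Fin m)) (l : Fin p) :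
    #(U.filter (part · = l)) + #(Uᶜ.filter (part · = l)) = #(univ.filter (part · = l)) := by
  rw [← card_union_of_disjoint (disjoint_filter_filter disjoint_compl_right), ← filter_union,
    union_compl]

theorem abs_mcharCoeff_gram {n : ℕ} {w : Fin m → EuclideanSpace ℝ (Fin n)}
    {E : Finset (Fin m)} (hw : ∀ x ∈ E, w x = 0) {e g : Fin p → ℕ}
    (heg : ∀ l, e l + g l = #(univ.filter (part · = l))) :
    |mcharCoeff (gram w) part e| = ∑ T ∈ univ.filter (fun T : Finset (Fin m) =>
      T ⊆ Eᶜ ∧ ∀ l, #(T.filter (part · = l)) = g l), gramDet w T := by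
  have hprofile : ∀ U : Finset (Fin m),
      (∀ l, #(Uᶜ.filter (part · = l)) = e l) ↔ ∀ l, #(U.filter (part · = l)) = g l :=
    fun U => forall_congr' fun l => by
      have := card_filter_add_card_filter_compl part U l
      have := heg l
      omega
  rw [mcharCoeff_eq_sum, abs_mul, abs_pow, abs_neg, abs_one, one_pow, one_mul]
  change |∑ U ∈ _, gramDet w U| = _
  rw [abs_of_nonneg (sum_nonneg fun U _ => gramDet_nonneg w U)]
  symm
  refine sum_subset (fun U hU => ?_) (fun U hU hUE => ?_)
  · simp only [mem_filter, mem_univ, true_and] at hU ⊢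
    exact (hprofile U).2 hU.2
  · simp only [mem_filter, mem_univ, true_and, hprofile] at hU hUE
    obtain ⟨x, hxU, hxE⟩ := not_subset.1 fun h => hUE ⟨h, hU⟩
    exact gramDet_eq_zero_of_mem hxU (hw x (by simpa using hxE))

end Partition

theorem statement8_general {m n p : ℕ} (A : Fin m → EuclideanSpace ℝ (Fin n)) (part : Fin m → Fin p)
    (mi ki ti : Fin p → ℕ)
    (hmi : ∀ l, (Finset.univ.filter (fun x => part x = l)).card = mi l)
    (hki : ∀ l, ki l ≤ mi l)
    (S : Finset (Fin m))
    (htk : ∀ l, ti l ≤ ki l)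
    (hSpos : 0 < gramDet A S)
    (j : Fin p) (hj : ti j < ki j)
    (i : Fin m) (hiS : i ∉ S) :
    (∑ T ∈ Finset.univ.filter (fun T : Finset (Fin m) =>
        T ⊆ (insert i S)ᶜ ∧ ∀ l, (T.filter (fun x => part x = l)).card =
          (if l = j then ki j - ti j - 1 else ki l - ti l)),
        gramDet A (insert i (S ∪ T)))
      / (∑ T ∈ Finset.univ.filter (fun T : Finset (Fin m) =>
          T ⊆ Sᶜ ∧ ∀ l, (T.filter (fun x => part x = l)).card = ki l - ti l),
          gramDet A (S ∪ T))
      = ‖res A S i‖ ^ 2 *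
          |mcharCoeff (gram (res (res A S) {i})) part
            (fun l => if l = j then mi j - ki j + ti j + 1 else mi l - ki l + ti l)|
        / |mcharCoeff (gram (res A S)) part (fun l => mi l - ki l + ti l)| := by
  have hcard_den : ∀ l, (mi l - ki l + ti l) + (ki l - ti l) = #(univ.filter (part · = l)) :=
    fun l => by have := hki l; have := htk l; rw [hmi]; omega
  have hcard_num : ∀ l, (if l = j then mi j - ki j + ti j + 1 else mi l - ki l + ti l) +
      (if l = j then ki j - ti j - 1 else ki l - ti l) = #(univ.filter (part · = l)) := by
    intro l
    split_ifs with hl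
    · subst hl; have := hki l; rw [hmi]; omega
    · exact hcard_den l
  have hB : ∀ x ∈ S, res A S x = 0 := fun _ => res_eq_zero A S
  have hC : ∀ x ∈ insert i S, res (res A S) {i} x = 0 := by
    intro x hx
    rcases mem_insert.1 hx with rfl | hx
    · exact res_eq_zero _ _ (mem_singleton_self x)
    · exact res_eq_zero_of_eq_zero _ _ (hB x hx)
  rw [sum_gramDet_insert_union A S hiS fun T hT =>
      subset_compl_iff_disjoint_left.1 (mem_filter.1 hT).2.1,
    sum_gramDet_union A S fun T hT => subset_compl_iff_disjoint_left.1 (mem_filter.1 hT).2.1,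
    abs_mcharCoeff_gram part hC hcard_num, abs_mcharCoeff_gram part hB hcard_den,
    mul_div_mul_left _ _ hSpos.ne']

/-- marginal probability formula for Partition-DPP: with partition
`[m] = 𝒫₁ ⊎ ⋯ ⊎ 𝒫_p` (`|𝒫_l| = m_l`), targets `k_l ≤ m_l`, a set `S` with
`|S ∩ 𝒫_l| = t_l ≤ k_l` and `det(A_S A_S^T) > 0`, an index `j` with `t_j < k_j`, and
`i ∈ 𝒫_j \ S`; letting `B = A - π_S(A)` and `C_i = B - π_{{i}}(B)`, and assuming the
denominator is nonzero,
`(∑_{T ∈ 𝒞₁} det(A_{S∪{i}∪T} A_{S∪{i}∪T}^T)) / (∑_{T ∈ 𝒞₂} det(A_{S∪T} A_{S∪T}^T))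
  = ‖b_i‖² |c'(C_i C_i^T)| / |c''(B B^T)|`,
where `𝒞₁` is the family of `T ⊆ [m] \ (S∪{i})` with `|T ∩ 𝒫_j| = k_j - t_j - 1` and
`|T ∩ 𝒫_l| = k_l - t_l` for `l ≠ j`, `𝒞₂` is the family of `T ⊆ [m] \ S` with
`|T ∩ 𝒫_l| = k_l - t_l` for all `l`,
`c' = c_{m₁-k₁+t₁, …, m_j-k_j+t_j+1, …, m_p-k_p+t_p}`, and
`c'' = c_{m₁-k₁+t₁, …, m_p-k_p+t_p}`. -/
theorem statement8 {m n p : ℕ} (A : Fin m → EuclideanSpace ℝ (Fin n)) (part : Fin m → Fin p)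
    (mi ki ti : Fin p → ℕ)
    (hmi : ∀ l, (Finset.univ.filter (fun x => part x = l)).card = mi l)
    (hki : ∀ l, ki l ≤ mi l)
    (S : Finset (Fin m))
    (hti : ∀ l, (S.filter (fun x => part x = l)).card = ti l)
    (htk : ∀ l, ti l ≤ ki l)
    (hSpos : 0 < gramDet A S)
    (j : Fin p) (hj : ti j < ki j)
    (i : Fin m) (hij : part i = j) (hiS : i ∉ S)
    (hden : (∑ T ∈ Finset.univ.filter (fun T : Finset (Fin m) =>
        T ⊆ Sᶜ ∧ ∀ l, (T.filter (fun x => part x = l)).card = ki l - ti l),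
        gramDet A (S ∪ T)) ≠ 0) :
    (∑ T ∈ Finset.univ.filter (fun T : Finset (Fin m) =>
        T ⊆ (insert i S)ᶜ ∧ ∀ l, (T.filter (fun x => part x = l)).card =
          (if l = j then ki j - ti j - 1 else ki l - ti l)),
        gramDet A (insert i (S ∪ T)))
      / (∑ T ∈ Finset.univ.filter (fun T : Finset (Fin m) =>
          T ⊆ Sᶜ ∧ ∀ l, (T.filter (fun x => part x = l)).card = ki l - ti l),
          gramDet A (S ∪ T))
      = ‖res A S i‖ ^ 2 *
          |mcharCoeff (gram (res (res A S) {i})) part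
            (fun l => if l = j then mi j - ki j + ti j + 1 else mi l - ki l + ti l)|
        / |mcharCoeff (gram (res A S)) part (fun l => mi l - ki l + ti l)| :=
  statement8_general A part mi ki ti hmi hki S htk hSpos j hj i hiS
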